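/- arXiv:2309.04002 — 5 statements merged into one kernel-verified Lean document; each statement's English description precedes it below -/
import Mathlib

section
/- If a random variable X takes values in [0,1] with E[X] = μ and P(X = μ) = p, then E[|X - μ|] ≤ 2(1-p)μ(1-μ), with equality achieved when the conditional distribution of X given X ≠ μ is Bernoulli(μ). -/
/-!
On `[0, 1]` the convex function `x ↦ |x - μ|` lies below its chord `μ + (1 - 2μ) x`, with equality
at the endpoints `0` and `1`. As `|X - μ|` vanishes on `{X = μ}`, `E|X - μ|` is the integral of
`|X - μ|` over `{X ≠ μ}`; this set has mass `1 - p` and, since `{X = μ}` carries `X`-mass `p μ`,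
`X`-mass `μ (1 - p)`. Integrating the chord over it gives
`(1 - p) μ + (1 - 2μ) μ (1 - p) = 2 (1 - p) μ (1 - μ)`, with equality when `X ∈ {0, 1}` a.s. off `{X = μ}`.
-/

open MeasureTheory Set

theorem abs_sub_le_chord {x c : ℝ} (hx : x ∈ Icc (0 : ℝ) 1) (hc : c ∈ Icc (0 : ℝ) 1) :
    |x - c| ≤ c + (1 - 2 * c) * x := by
  obtain ⟨hx0, hx1⟩ := hx
  obtain ⟨hc0, hc1⟩ := hc
  rw [abs_le]
  constructor <;> nlinarith

theorem abs_sub_eq_chord_of_eq_zero_or_one {x c : ℝ} (hc : c ∈ Icc (0 : ℝ) 1)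
    (hx : x = 0 ∨ x = 1) : |x - c| = c + (1 - 2 * c) * x := by
  rcases hx with rfl | rfl
  · rw [zero_sub, abs_neg, abs_of_nonneg hc.1]; ring
  · rw [abs_of_nonneg (sub_nonneg.2 hc.2)]; ring

section

variable {Ω : Type*} [MeasurableSpace Ω] {P : Measure Ω} {X : Ω → ℝ}

theorem setIntegral_ne_eq_integral_sub (hXm : Measurable X) (hX : Integrable X P) (c : ℝ) :
    ∫ ω in {ω | X ω = c}ᶜ, X ω ∂P = ∫ ω, X ω ∂P - c * P.real {ω | X ω = c} := by
  have hs : MeasurableSet {ω | X ω = c} := hXm (measurableSet_singleton c)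
  have hon : ∫ ω in {ω | X ω = c}, X ω ∂P = c * P.real {ω | X ω = c} := by
    rw [setIntegral_congr_fun hs (fun ω (hω : X ω = c) => hω), setIntegral_const, smul_eq_mul,
      mul_comm]
  rw [← integral_add_compl hs hX, hon, add_sub_cancel_left]

theorem setIntegral_chord_ne_integral [IsProbabilityMeasure P] (hXm : Measurable X)
    (hX : Integrable X P) {μ : ℝ} (hμ : ∫ ω, X ω ∂P = μ) :
    ∫ ω in {ω | X ω = μ}ᶜ, (μ + (1 - 2 * μ) * X ω) ∂P
      = 2 * (1 - P.real {ω | X ω = μ}) * μ * (1 - μ) := by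
  have hs : MeasurableSet {ω | X ω = μ} := hXm (measurableSet_singleton μ)
  rw [integral_add (integrable_const μ) (hX.const_mul _).integrableOn, setIntegral_const,
    integral_const_mul, setIntegral_ne_eq_integral_sub hXm hX, hμ,
    probReal_compl_eq_one_sub hs, smul_eq_mul]
  ring

end

/-- If X takes values in [0,1] with E[X] = μ and P(X = μ) = p, then
E[|X - μ|] ≤ 2(1-p)μ(1-μ), with equality when the conditional distribution of X
given X ≠ μ is Bernoulli(μ). -/
theorem stmt0 {Ω : Type*} [MeasurableSpace Ω] (P : Measure Ω) [IsProbabilityMeasure P]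
    (X : Ω → ℝ) (hXm : Measurable X) (hrange : ∀ ω, X ω ∈ Set.Icc (0:ℝ) 1)
    (μ p : ℝ) (hμ : μ = ∫ ω, X ω ∂P) (hp : p = (P {ω | X ω = μ}).toReal) :
    (∫ ω, |X ω - μ| ∂P) ≤ 2 * (1 - p) * μ * (1 - μ) ∧
    ((∀ᵐ ω ∂P, X ω ≠ μ → X ω = 0 ∨ X ω = 1) →
      (P {ω | X ω = 1 ∧ X ω ≠ μ}).toReal = μ * (1 - p) →
      (∫ ω, |X ω - μ| ∂P) = 2 * (1 - p) * μ * (1 - μ)) := by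
  have hX : Integrable X P := .of_bound hXm.aestronglyMeasurable 1 <| ae_of_all _ fun ω => by
    rw [Real.norm_of_nonneg (hrange ω).1]; exact (hrange ω).2
  have hμ01 : μ ∈ Icc (0 : ℝ) 1 := by
    rw [hμ]
    exact ⟨integral_nonneg fun ω => (hrange ω).1,
      (integral_mono hX (integrable_const 1) fun ω => (hrange ω).2).trans_eq (by simp)⟩
  have hs : MeasurableSet {ω | X ω = μ} := hXm (measurableSet_singleton μ)
  have habs : ∫ ω, |X ω - μ| ∂P = ∫ ω in {ω | X ω = μ}ᶜ, |X ω - μ| ∂P :=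
    (setIntegral_eq_integral_of_forall_compl_eq_zero fun ω hω => by
      rw [not_not.1 hω, sub_self, abs_zero]).symm
  rw [habs, hp, ← measureReal_def, ← setIntegral_chord_ne_integral hXm hX hμ.symm]
  refine ⟨setIntegral_mono (hX.sub (integrable_const μ)).abs.integrableOn
      ((integrable_const μ).add (hX.const_mul _)).integrableOn
      fun ω => abs_sub_le_chord (hrange ω) hμ01,
    fun hbinary _ => setIntegral_congr_ae hs.compl ?_⟩
  filter_upwards [hbinary] with ω hω hne
  exact abs_sub_eq_chord_of_eq_zero_or_one hμ01 (hω hne)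
end

section
/- Let (X,Y,Z) be a random vector where Y is supported on a finite set 𝒴 with |𝒴| ≥ 2. Define ETV(X,Y,Z) = (1 - 1/|𝒴|)⁻¹ · E[TV(L(Y|X,Z), L(Y|Z))], where the expectation is over (X,Z). Then 0 ≤ ETV(X,Y,Z) ≤ 1. -/
open MeasureTheory

open scoped NNReal ENNReal

lemma etv_key {𝒳 𝒵 : Type*} [MeasurableSpace 𝒳] [MeasurableSpace 𝒵]
    (P : Measure (𝒳 × 𝒵)) [IsProbabilityMeasure P]
    (f : 𝒳 × 𝒵 → ℝ) (g : 𝒵 → ℝ)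
    (hf : Measurable f) (hg : Measurable g)
    (hf0 : ∀ q, 0 ≤ f q) (hg0 : ∀ z, 0 ≤ g z)
    (hf1 : ∀ q, f q ≤ 1) (hg1 : ∀ z, g z ≤ 1)
    (hcond : ∀ B : Set 𝒵, MeasurableSet B →
      ∫ q in {q : 𝒳 × 𝒵 | q.2 ∈ B}, f q ∂P = ∫ q in {q : 𝒳 × 𝒵 | q.2 ∈ B}, g q.2 ∂P) :
    ∫ q, f q * g q.2 ∂P = ∫ q, g q.2 * g q.2 ∂P := by
  set F : 𝒳 × 𝒵 → ℝ≥0 := fun q => (f q).toNNReal with hF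
  set G : 𝒳 × 𝒵 → ℝ≥0 := fun q => (g q.2).toNNReal with hG
  have hFm : Measurable F := hf.real_toNNReal
  have hGm : Measurable G := (hg.comp measurable_snd).real_toNNReal
  have hgsm : Measurable fun q : 𝒳 × 𝒵 => g q.2 := hg.comp measurable_snd
  -- measure equality
  have hmeq : (P.withDensity (fun q => (F q : ℝ≥0∞))).map Prod.snd
      = (P.withDensity (fun q => (G q : ℝ≥0∞))).map Prod.snd := by
    ext B hB
    rw [Measure.map_apply measurable_snd hB, Measure.map_apply measurable_snd hB,
      withDensity_apply _ (measurable_snd hB), withDensity_apply _ (measurable_snd hB)]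
    have hint1 : Integrable f (P.restrict (Prod.snd ⁻¹' B)) := by
      refine ⟨hf.aestronglyMeasurable, ?_⟩
      exact HasFiniteIntegral.of_bounded (C := 1)
        (Filter.Eventually.of_forall fun q => by
          rw [Real.norm_eq_abs, abs_of_nonneg (hf0 q)]; exact hf1 q)
    have hint2 : Integrable (fun q : 𝒳 × 𝒵 => g q.2) (P.restrict (Prod.snd ⁻¹' B)) := by
      refine ⟨hgsm.aestronglyMeasurable, ?_⟩
      exact HasFiniteIntegral.of_bounded (C := 1)
        (Filter.Eventually.of_forall fun q => by
          rw [Real.norm_eq_abs, abs_of_nonneg (hg0 q.2)]; exact hg1 q.2)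
    have h1 : ∫⁻ q in Prod.snd ⁻¹' B, (F q : ℝ≥0∞) ∂P
        = ENNReal.ofReal (∫ q in Prod.snd ⁻¹' B, f q ∂P) := by
      rw [ofReal_integral_eq_lintegral_ofReal hint1
        (Filter.Eventually.of_forall fun q => hf0 q)]
      rfl
    have h2 : ∫⁻ q in Prod.snd ⁻¹' B, (G q : ℝ≥0∞) ∂P
        = ENNReal.ofReal (∫ q in Prod.snd ⁻¹' B, g q.2 ∂P) := by
      rw [ofReal_integral_eq_lintegral_ofReal hint2
        (Filter.Eventually.of_forall fun q => hg0 q.2)]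
      rfl
    rw [h1, h2]
    congr 1
    have := hcond B hB
    simpa [Set.preimage] using this
  have key : ∫ z, g z ∂((P.withDensity (fun q => (F q : ℝ≥0∞))).map Prod.snd)
      = ∫ z, g z ∂((P.withDensity (fun q => (G q : ℝ≥0∞))).map Prod.snd) := by
    rw [hmeq]
  rw [integral_map measurable_snd.aemeasurable hg.aestronglyMeasurable,
    integral_map measurable_snd.aemeasurable hg.aestronglyMeasurable,
    integral_withDensity_eq_integral_smul hFm, integral_withDensity_eq_integral_smul hGm] at key
  have e1 : ∀ q : 𝒳 × 𝒵, F q • g q.2 = f q * g q.2 := fun q => by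
    simp [hF, NNReal.smul_def, Real.coe_toNNReal _ (hf0 q)]
  have e2 : ∀ q : 𝒳 × 𝒵, G q • g q.2 = g q.2 * g q.2 := fun q => by
    simp [hG, NNReal.smul_def, Real.coe_toNNReal _ (hg0 q.2)]
  simpa [e1, e2] using key

/-- Range of the ETV: with Y supported on a finite set 𝒴 (|𝒴| ≥ 2),
ETV = (1-1/|𝒴|)⁻¹ E[TV(L(Y|X,Z), L(Y|Z))] satisfies 0 ≤ ETV ≤ 1.
Here r(·|x,z) and s(·|z) are the conditional pmfs of Y, and the compatibility
condition expresses that s(·|z) is the conditional distribution of Y given Z alone. -/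
theorem stmt5 {𝒳 𝒵 𝒴 : Type*} [MeasurableSpace 𝒳] [MeasurableSpace 𝒵] [Fintype 𝒴]
    (hcard : 2 ≤ Fintype.card 𝒴)
    (P : Measure (𝒳 × 𝒵)) [IsProbabilityMeasure P]
    (r : 𝒳 × 𝒵 → 𝒴 → ℝ) (s : 𝒵 → 𝒴 → ℝ)
    (hrm : ∀ y, Measurable fun q => r q y) (hsm : ∀ y, Measurable fun z => s z y)
    (hr0 : ∀ q y, 0 ≤ r q y) (hs0 : ∀ z y, 0 ≤ s z y)
    (hr1 : ∀ q, ∑ y, r q y = 1) (hs1 : ∀ z, ∑ y, s z y = 1)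
    (hcond : ∀ (y : 𝒴) (B : Set 𝒵), MeasurableSet B →
      ∫ q in {q : 𝒳 × 𝒵 | q.2 ∈ B}, r q y ∂P = ∫ q in {q : 𝒳 × 𝒵 | q.2 ∈ B}, s q.2 y ∂P) :
    0 ≤ (1 - 1 / (Fintype.card 𝒴 : ℝ))⁻¹ * ∫ q, (1/2) * ∑ y, |r q y - s q.2 y| ∂P ∧
    (1 - 1 / (Fintype.card 𝒴 : ℝ))⁻¹ * ∫ q, (1/2) * ∑ y, |r q y - s q.2 y| ∂P ≤ 1 := by
  have hcard2 : (2:ℝ) ≤ (Fintype.card 𝒴 : ℝ) := by exact_mod_cast hcard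
  have hcardpos : (0:ℝ) < (Fintype.card 𝒴 : ℝ) := by linarith
  set c : ℝ := 1 - 1 / (Fintype.card 𝒴 : ℝ) with hc_def
  have hc : 0 < c := by
    have : 1 / (Fintype.card 𝒴 : ℝ) ≤ 1 / 2 := by
      apply one_div_le_one_div_of_le <;> linarith
    simp only [hc_def]; linarith
  have hrle1 : ∀ q y, r q y ≤ 1 := fun q y =>
    (hr1 q) ▸ Finset.single_le_sum (fun i _ => hr0 q i) (Finset.mem_univ y)
  have hsle1 : ∀ z y, s z y ≤ 1 := fun z y =>
    (hs1 z) ▸ Finset.single_le_sum (fun i _ => hs0 z i) (Finset.mem_univ y)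
  -- integrability of bounded measurable functions
  have bdd_int : ∀ (F : 𝒳 × 𝒵 → ℝ), Measurable F → (∀ q, |F q| ≤ 2) → Integrable F P := by
    intro F hFm hFb
    exact ⟨hFm.aestronglyMeasurable,
      HasFiniteIntegral.of_bounded (C := 2) (Filter.Eventually.of_forall fun q => hFb q)⟩
  set h : 𝒳 × 𝒵 → ℝ := fun q => (1/2) * ∑ y, |r q y - s q.2 y| with hh_def
  set g : 𝒳 × 𝒵 → ℝ := fun q => 1 - ∑ y, r q y * s q.2 y with hg_def
  set g' : 𝒳 × 𝒵 → ℝ := fun q => 1 - ∑ y, s q.2 y * s q.2 y with hg'_def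
  have hh_nonneg : ∀ q, 0 ≤ h q := fun q => by
    apply mul_nonneg (by norm_num)
    exact Finset.sum_nonneg fun y _ => abs_nonneg _
  have hrs_bd : ∀ q (y : 𝒴), 0 ≤ r q y * s q.2 y ∧ r q y * s q.2 y ≤ 1 := fun q y =>
    ⟨mul_nonneg (hr0 q y) (hs0 q.2 y),
     mul_le_one₀ (hrle1 q y) (hs0 q.2 y) (hsle1 q.2 y)⟩
  have hss_bd : ∀ (q : 𝒳 × 𝒵) (y : 𝒴), 0 ≤ s q.2 y * s q.2 y ∧ s q.2 y * s q.2 y ≤ 1 := fun q y =>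
    ⟨mul_nonneg (hs0 q.2 y) (hs0 q.2 y),
     mul_le_one₀ (hsle1 q.2 y) (hs0 q.2 y) (hsle1 q.2 y)⟩
  have hhm : Measurable h := by
    apply Measurable.const_mul
    exact Finset.measurable_sum _ fun y _ => ((hrm y).sub ((hsm y).comp measurable_snd)).abs
  have hgm : Measurable g := by
    apply Measurable.const_sub
    exact Finset.measurable_sum _ fun y _ => (hrm y).mul ((hsm y).comp measurable_snd)
  have hg'm : Measurable g' := by
    apply Measurable.const_sub
    exact Finset.measurable_sum _ fun y _ =>
      ((hsm y).comp measurable_snd).mul ((hsm y).comp measurable_snd)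
  have hh_le_g : ∀ q, h q ≤ g q := by
    intro q
    have hb : ∀ y : 𝒴, |r q y - s q.2 y| ≤ r q y + s q.2 y - 2 * (r q y * s q.2 y) := by
      intro y
      have h1 := hr0 q y; have h2 := hs0 q.2 y
      have h3 := hrle1 q y; have h4 := hsle1 q.2 y
      rw [abs_le]; constructor <;> nlinarith
    have hsum : ∑ y, |r q y - s q.2 y| ≤ ∑ y, (r q y + s q.2 y - 2 * (r q y * s q.2 y)) :=
      Finset.sum_le_sum fun y _ => hb y
    have : ∑ y, (r q y + s q.2 y - 2 * (r q y * s q.2 y))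
        = 2 - 2 * ∑ y, r q y * s q.2 y := by
      rw [Finset.sum_sub_distrib, Finset.sum_add_distrib, hr1 q, hs1 q.2,
        ← Finset.mul_sum]
      ring
    simp only [hh_def, hg_def]
    rw [this] at hsum
    linarith
  have hg'_le_c : ∀ q, g' q ≤ c := by
    intro q
    have hcs : (∑ y, s q.2 y) ^ 2 ≤ (Fintype.card 𝒴 : ℝ) * ∑ y, s q.2 y ^ 2 := by
      simpa using sq_sum_le_card_mul_sum_sq (s := (Finset.univ : Finset 𝒴)) (f := s q.2)
    rw [hs1 q.2] at hcs
    have : 1 / (Fintype.card 𝒴 : ℝ) ≤ ∑ y, s q.2 y ^ 2 := by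
      rw [div_le_iff₀ hcardpos]; nlinarith
    simp only [hg'_def, hc_def]
    have e : ∑ y, s q.2 y * s q.2 y = ∑ y, s q.2 y ^ 2 := by
      apply Finset.sum_congr rfl; intro y _; ring
    rw [e]; linarith
  have hh_int : Integrable h P := bdd_int h hhm fun q => by
    rw [abs_of_nonneg (hh_nonneg q)]
    have : ∑ y, |r q y - s q.2 y| ≤ ∑ y, (r q y + s q.2 y - 2 * (r q y * s q.2 y)) :=
      Finset.sum_le_sum fun y _ => by
        have h1 := hr0 q y; have h2 := hs0 q.2 y
        have h3 := hrle1 q y; have h4 := hsle1 q.2 y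
        rw [abs_le]; constructor <;> nlinarith
    have hnn : (0:ℝ) ≤ ∑ y, r q y * s q.2 y :=
      Finset.sum_nonneg fun y _ => (hrs_bd q y).1
    have e : ∑ y, (r q y + s q.2 y - 2 * (r q y * s q.2 y))
        = 2 - 2 * ∑ y, r q y * s q.2 y := by
      rw [Finset.sum_sub_distrib, Finset.sum_add_distrib, hr1 q, hs1 q.2, ← Finset.mul_sum]
      ring
    simp only [hh_def]
    linarith [this.trans_eq e]
  have hrs_int : ∀ y : 𝒴, Integrable (fun q => r q y * s q.2 y) P := fun y =>
    bdd_int _ ((hrm y).mul ((hsm y).comp measurable_snd)) fun q => by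
      rw [abs_of_nonneg (hrs_bd q y).1]; linarith [(hrs_bd q y).2]
  have hss_int : ∀ y : 𝒴, Integrable (fun q => s q.2 y * s q.2 y) P := fun y =>
    bdd_int _ (((hsm y).comp measurable_snd).mul ((hsm y).comp measurable_snd)) fun q => by
      rw [abs_of_nonneg (hss_bd q y).1]; linarith [(hss_bd q y).2]
  have hg_int : Integrable g P := by
    apply (integrable_const (1:ℝ)).sub
    exact integrable_finset_sum _ fun y _ => hrs_int y
  have hg'_int : Integrable g' P := by
    apply (integrable_const (1:ℝ)).sub
    exact integrable_finset_sum _ fun y _ => hss_int y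
  -- key : integrals of products equal
  have hkey : ∀ y : 𝒴, ∫ q, r q y * s q.2 y ∂P = ∫ q, s q.2 y * s q.2 y ∂P := by
    intro y
    exact etv_key P (fun q => r q y) (fun z => s z y) (hrm y) (hsm y)
      (fun q => hr0 q y) (fun z => hs0 z y) (fun q => hrle1 q y) (fun z => hsle1 z y)
      (hcond y)
  have hgg' : ∫ q, g q ∂P = ∫ q, g' q ∂P := by
    simp only [hg_def, hg'_def]
    rw [integral_sub (integrable_const 1) (integrable_finset_sum _ fun y _ => hrs_int y),
      integral_sub (integrable_const 1) (integrable_finset_sum _ fun y _ => hss_int y),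
      integral_finset_sum _ (fun y _ => hrs_int y),
      integral_finset_sum _ (fun y _ => hss_int y)]
    congr 1
    exact Finset.sum_congr rfl fun y _ => hkey y
  have hInt_le : ∫ q, h q ∂P ≤ c := by
    calc ∫ q, h q ∂P ≤ ∫ q, g q ∂P := integral_mono hh_int hg_int hh_le_g
    _ = ∫ q, g' q ∂P := hgg'
    _ ≤ ∫ _, c ∂P := integral_mono hg'_int (integrable_const c) hg'_le_c
    _ = c := by simp
  have hInt_nonneg : 0 ≤ ∫ q, h q ∂P := integral_nonneg hh_nonneg
  constructor
  · exact mul_nonneg (inv_nonneg.mpr hc.le) hInt_nonneg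
  · rw [inv_mul_le_iff₀ hc]
    simpa using hInt_le
end

section
/- If X is continuously distributed with law L_X, Y ~ Uniform{1,…,K} independent of X, and C is any procedure that produces a (1-α)-probability upper confidence bound for ETV(X,Y) valid simultaneously over all joint laws of (X,Y) with these given marginals, then P(C(X₁:ₙ, Y₁:ₙ) ≥ 1) ≥ 1 - α when the data are drawn i.i.d. from L_X × Uniform{1,…,K}. -/
/-!
Cut the real line into `J * K` quantile cells of `L_X`, each of probability `1 / (J K)`, indexed by
pairs `(c, v) : Fin J × Fin K`. For every labelling `θ : Fin J → Fin K`, the coupling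
`Y = v(X) + θ(c(X))` has a uniform `Y`-marginal and makes `Y` a function of `X`, so its ETV is `1`
and validity forces `C ≥ 1` with probability at least `1 - α` under it. Now average over a uniformly
random `θ`: when the `n` sample points lie in distinct `c`-cells, their labels `θ(c(Xᵢ))` are
i.i.d. uniform and independent of the `Xᵢ`, so the averaged law of the data differs from
`(L_X × Unif)^n` only on the collision event, of probability at most `n² / J`. Let `J → ∞`.
-/

open MeasureTheory ProbabilityTheory Filter Set
open scoped ENNReal Topology

namespace PMF

variable {α β : Type*} [Fintype α] [Nonempty α] [MeasurableSpace α] [MeasurableSingletonClass α]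
  [Fintype β] [Nonempty β] [MeasurableSpace β] [MeasurableSingletonClass β]

lemma toMeasure_uniformOfFintype_singleton (a : α) :
    (uniformOfFintype α).toMeasure {a} = (Fintype.card α : ℝ≥0∞)⁻¹ := by
  rw [toMeasure_apply_singleton _ _ (measurableSet_singleton a), uniformOfFintype_apply]

lemma map_toMeasure_uniformOfFintype_equiv (e : α ≃ β) :
    (uniformOfFintype α).toMeasure.map e = (uniformOfFintype β).toMeasure := by
  refine Measure.ext_of_singleton fun b ↦ ?_
  rw [Measure.map_apply .of_discrete (measurableSet_singleton b), ← e.image_symm_eq_preimage,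
    image_singleton, toMeasure_uniformOfFintype_singleton, toMeasure_uniformOfFintype_singleton,
    Fintype.card_congr e]

lemma toMeasure_uniformOfFintype_prod :
    (uniformOfFintype α).toMeasure.prod (uniformOfFintype β).toMeasure
      = (uniformOfFintype (α × β)).toMeasure := by
  refine Measure.ext_of_singleton fun p ↦ ?_
  rw [← singleton_prod_singleton, Measure.prod_prod, singleton_prod_singleton,
    toMeasure_uniformOfFintype_singleton, toMeasure_uniformOfFintype_singleton,
    toMeasure_uniformOfFintype_singleton, Fintype.card_prod, Nat.cast_mul,
    ENNReal.mul_inv (.inr (ENNReal.natCast_ne_top _)) (.inl (ENNReal.natCast_ne_top _))]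

end PMF

namespace ProbabilityTheory

section CdfBin

variable {μ : Measure ℝ}

lemma continuous_cdf [IsProbabilityMeasure μ] [NullSingletonClass μ] : Continuous (cdf μ) := by
  refine continuous_iff_continuousAt.2 fun x ↦
    (monotone_cdf μ).continuousAt_iff_leftLim_eq_rightLim.2 ?_
  have h := (cdf μ).measure_singleton x
  rw [measure_cdf, measure_singleton, eq_comm, ENNReal.ofReal_eq_zero, sub_nonpos] at h
  rw [StieltjesFunction.rightLim_eq]
  exact le_antisymm ((monotone_cdf μ).leftLim_le le_rfl) h

lemma measure_cdf_lt [IsProbabilityMeasure μ] [NullSingletonClass μ] {t : ℝ} (ht₀ : 0 ≤ t)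
    (ht₁ : t < 1) : μ {x | cdf μ x < t} = ENNReal.ofReal t := by
  rcases ht₀.eq_or_lt with rfl | ht₀
  · simp [(cdf_nonneg μ _).not_gt]
  set T := {x | t ≤ cdf μ x}
  have hT : T.Nonempty := ((tendsto_cdf_atTop μ).eventually (eventually_ge_nhds ht₁)).exists
  obtain ⟨x₀, hx₀⟩ := ((tendsto_cdf_atBot μ).eventually (eventually_lt_nhds ht₀)).exists
  have hTbdd : BddBelow T := ⟨x₀, fun x hx ↦ le_of_not_gt fun hlt ↦
    (hx.trans_lt (hx₀.trans_le' (monotone_cdf μ hlt.le))).false⟩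
  set q := sInf T
  have hq : q ∈ T := (isClosed_le continuous_const continuous_cdf).csInf_mem hT hTbdd
  have hIio : {x | cdf μ x < t} = Iio q := by
    ext x
    refine ⟨fun hx ↦ lt_of_not_ge fun hqx ↦ (hq.trans (monotone_cdf μ hqx)).not_gt hx,
      fun hx ↦ show cdf μ x < t from not_le.1 (notMem_of_lt_csInf (s := T) hx hTbdd)⟩
  have hcdf_q : cdf μ q = t := by
    refine le_antisymm (le_of_tendsto (continuous_cdf.tendsto q |>.mono_left
      (nhdsWithin_le_nhds (s := Iio q))) ?_) hq
    filter_upwards [self_mem_nhdsWithin] with x hx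
    exact (hIio ▸ hx : x ∈ {x | cdf μ x < t}).le
  rw [hIio, measure_congr Iio_ae_eq_Iic, ← ofReal_cdf, hcdf_q]

/-- The `min` puts the points where `cdf μ x = 1` into the top bin. -/
noncomputable def cdfBin (μ : Measure ℝ) (M : ℕ) [NeZero M] (x : ℝ) : Fin M :=
  ⟨min ⌊M * cdf μ x⌋₊ (M - 1), by have := NeZero.pos M; omega⟩

variable {M : ℕ} [NeZero M]

lemma measurable_cdfBin : Measurable (cdfBin μ M) := by
  refine Monotone.measurable fun x y hxy ↦ Fin.mk_le_mk.2 (min_le_min_right _ (Nat.floor_mono ?_))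
  exact mul_le_mul_of_nonneg_left (monotone_cdf μ hxy) (Nat.cast_nonneg M)

lemma cdfBin_lt_iff {k : ℕ} (hk : k < M) (x : ℝ) :
    (cdfBin μ M x : ℕ) < k ↔ cdf μ x < k / M := by
  have hM : (0 : ℝ) < M := Nat.cast_pos.2 (NeZero.pos M)
  rw [cdfBin, lt_div_iff₀' hM, ← Nat.floor_lt (by have := cdf_nonneg μ x; positivity)]
  simp only [min_lt_iff]
  omega

variable [IsProbabilityMeasure μ] [NullSingletonClass μ]

lemma measure_cdfBin_lt {k : ℕ} (hk : k ≤ M) :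
    μ {x | (cdfBin μ M x : ℕ) < k} = ENNReal.ofReal (k / M) := by
  have hM : (0 : ℝ) < M := Nat.cast_pos.2 (NeZero.pos M)
  rcases hk.lt_or_eq with hk | rfl
  · simp_rw [cdfBin_lt_iff hk]
    exact measure_cdf_lt (by positivity) ((div_lt_one hM).2 (Nat.cast_lt.2 hk))
  · simp [hM.ne']

theorem map_cdfBin : μ.map (cdfBin μ M) = (PMF.uniformOfFintype (Fin M)).toMeasure := by
  have hM : (0 : ℝ) < M := Nat.cast_pos.2 (NeZero.pos M)
  refine Measure.ext_of_singleton fun k ↦ ?_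
  have hbin : cdfBin μ M ⁻¹' {k} =
      {x | (cdfBin μ M x : ℕ) < k + 1} \ {x | (cdfBin μ M x : ℕ) < k} := by
    ext x
    simp only [mem_preimage, mem_singleton_iff, Fin.ext_iff, Set.mem_sdiff, mem_ofPred_eq]
    omega
  rw [Measure.map_apply measurable_cdfBin (measurableSet_singleton k), hbin,
    measure_sdiff (ofPred_subset_ofPred.2 fun _ ↦ Nat.lt_succ_of_lt)
      (measurable_cdfBin (t := {j : Fin M | (j : ℕ) < k}) .of_discrete).nullMeasurableSet
      (measure_ne_top μ _),
    measure_cdfBin_lt k.is_lt, measure_cdfBin_lt k.is_lt.le, ← ENNReal.ofReal_sub _ (by positivity),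
    PMF.toMeasure_uniformOfFintype_singleton, Fintype.card_fin, ← ENNReal.ofReal_natCast,
    ← ENNReal.ofReal_inv_of_pos hM]
  congr 1
  push_cast
  ring

end CdfBin

theorem exists_measurable_map_eq_uniformOfFintype (μ : Measure ℝ) [IsProbabilityMeasure μ]
    [NullSingletonClass μ] (α : Type*) [Fintype α] [Nonempty α] [MeasurableSpace α]
    [MeasurableSingletonClass α] :
    ∃ f : ℝ → α, Measurable f ∧ μ.map f = (PMF.uniformOfFintype α).toMeasure := by
  have : NeZero (Fintype.card α) := ⟨Fintype.card_ne_zero⟩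
  refine ⟨(Fintype.equivFin α).symm ∘ cdfBin μ _, Measurable.of_discrete.comp measurable_cdfBin, ?_⟩
  rw [← Measure.map_map .of_discrete measurable_cdfBin, map_cdfBin,
    PMF.map_toMeasure_uniformOfFintype_equiv]

section Pi

variable {ι : Type*} [Fintype ι] {β : Type*} [MeasurableSpace β] (ν : Measure β)
  [IsProbabilityMeasure ν]

lemma map_pi_comp_injective {κ : Type*} [Fintype κ] {e : ι → κ} (he : e.Injective)
    {f : ι → β → β} (hf : ∀ i, Measurable (f i)) (hfν : ∀ i, ν.map (f i) = ν) :
    (Measure.pi fun _ : κ ↦ ν).map (fun θ i ↦ f i (θ (e i))) = Measure.pi fun _ : ι ↦ ν := by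
  have hind : iIndepFun (fun i (θ : κ → β) ↦ f i (θ (e i))) (Measure.pi fun _ ↦ ν) :=
    ((iIndepFun_pi (X := fun _ ↦ id) fun _ ↦ aemeasurable_id).precomp he).comp _ hf
  rw [(iIndepFun_iff_map_fun_eq_pi_map (f := fun i (θ : κ → β) ↦ f i (θ (e i)))
    fun i ↦ ((hf i).comp (measurable_pi_apply (e i))).aemeasurable).1 hind]
  refine congrArg _ (funext fun i ↦ ?_)
  calc (Measure.pi fun _ : κ ↦ ν).map (fun θ ↦ f i (θ (e i)))
      = ((Measure.pi fun _ : κ ↦ ν).map (Function.eval (e i))).map (f i) :=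
        (Measure.map_map (hf i) (measurable_pi_apply _)).symm
    _ = ν := by rw [(measurePreserving_eval _ (e i)).map_eq, hfν]

lemma map_pi_pair {i j : ι} (hij : i ≠ j) :
    (Measure.pi fun _ : ι ↦ ν).map (fun xs ↦ (xs i, xs j)) = ν.prod ν := by
  rw [(indepFun_iff_map_prod_eq_prod_map_map (measurable_pi_apply i).aemeasurable
    (measurable_pi_apply j).aemeasurable).1
    ((iIndepFun_pi (X := fun _ ↦ id) fun _ ↦ aemeasurable_id).indepFun hij),
    (measurePreserving_eval _ i).map_eq, (measurePreserving_eval _ j).map_eq]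

variable {α : Type*} [Fintype α] [Nonempty α] [MeasurableSpace α] [MeasurableSingletonClass α]
  {c : β → α}

lemma measure_pi_collision_of_ne (hc : Measurable c)
    (hνc : ν.map c = (PMF.uniformOfFintype α).toMeasure) {i j : ι} (hij : i ≠ j) :
    (Measure.pi fun _ : ι ↦ ν) {xs | c (xs i) = c (xs j)} = (Fintype.card α : ℝ≥0∞)⁻¹ := by
  have hdiag : MeasurableSet {p : α × α | p.1 = p.2} := .of_discrete
  calc (Measure.pi fun _ : ι ↦ ν) {xs | c (xs i) = c (xs j)}
      = ((ν.map c).prod (ν.map c)) {p | p.1 = p.2} := by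
        rw [Measure.map_prod_map _ _ hc hc, Measure.map_apply (hc.prodMap hc) hdiag,
          ← map_pi_pair ν hij, Measure.map_apply (by fun_prop) ((hc.prodMap hc) hdiag)]
        rfl
    _ = (Fintype.card α : ℝ≥0∞)⁻¹ := by
        simp_rw [hνc, Measure.prod_apply hdiag, preimage_ofPred_eq, ofPred_eq_eq_singleton',
          PMF.toMeasure_uniformOfFintype_singleton, lintegral_const, measure_univ, mul_one]

lemma measure_pi_not_injective_le (hc : Measurable c)
    (hνc : ν.map c = (PMF.uniformOfFintype α).toMeasure) :
    (Measure.pi fun _ : ι ↦ ν) {xs | ¬ (fun i ↦ c (xs i)).Injective}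
      ≤ Fintype.card ι * Fintype.card ι * (Fintype.card α : ℝ≥0∞)⁻¹ := by
  set νₙ := Measure.pi fun _ : ι ↦ ν
  have hpair : ∀ i j, νₙ {xs | i ≠ j ∧ c (xs i) = c (xs j)} ≤ (Fintype.card α : ℝ≥0∞)⁻¹ := by
    intro i j
    by_cases hij : i = j
    · simp [hij]
    · exact (measure_mono fun xs hxs ↦ hxs.2).trans (measure_pi_collision_of_ne ν hc hνc hij).le
  calc νₙ {xs | ¬ (fun i ↦ c (xs i)).Injective}
      ≤ νₙ (⋃ i, ⋃ j, {xs | i ≠ j ∧ c (xs i) = c (xs j)}) := by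
        refine measure_mono fun xs hxs ↦ ?_
        obtain ⟨i, j, hcij, hij⟩ := Function.not_injective_iff.1 hxs
        exact mem_iUnion₂.2 ⟨i, j, hij, hcij⟩
    _ ≤ ∑ i, ∑ j, νₙ {xs | i ≠ j ∧ c (xs i) = c (xs j)} :=
        (measure_iUnion_fintype_le _ _).trans
          (Finset.sum_le_sum fun _ _ ↦ measure_iUnion_fintype_le _ _)
    _ ≤ ∑ _i : ι, ∑ _j : ι, (Fintype.card α : ℝ≥0∞)⁻¹ :=
        Finset.sum_le_sum fun i _ ↦ Finset.sum_le_sum fun j _ ↦ hpair i j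
    _ = Fintype.card ι * Fintype.card ι * (Fintype.card α : ℝ≥0∞)⁻¹ := by
        simp only [Finset.sum_const, Finset.card_univ, nsmul_eq_mul, mul_assoc]

end Pi

section GraphLaw

variable {𝓧 : Type*} [MeasurableSpace 𝓧]

noncomputable def graphLaw {β : Type*} [MeasurableSpace β] (μ : Measure 𝓧) (g : 𝓧 → β) :
    Measure (𝓧 × β) :=
  μ.map fun x ↦ (x, g x)

variable {β : Type*} [MeasurableSpace β] (μ : Measure 𝓧) {g : 𝓧 → β}

instance isFiniteMeasure_graphLaw [IsFiniteMeasure μ] : IsFiniteMeasure (graphLaw μ g) := by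
  rw [graphLaw]; infer_instance

lemma isProbabilityMeasure_graphLaw [IsProbabilityMeasure μ] (hg : Measurable g) :
    IsProbabilityMeasure (graphLaw μ g) :=
  Measure.isProbabilityMeasure_map (measurable_id'.prodMk hg).aemeasurable

lemma map_fst_graphLaw (hg : Measurable g) : (graphLaw μ g).map Prod.fst = μ := by
  rw [graphLaw, Measure.map_map measurable_fst (measurable_id'.prodMk hg)]
  exact Measure.map_id

lemma map_snd_graphLaw (hg : Measurable g) : (graphLaw μ g).map Prod.snd = μ.map g :=
  Measure.map_map measurable_snd (measurable_id'.prodMk hg)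

lemma condKernel_graphLaw [StandardBorelSpace β] [Nonempty β] [IsFiniteMeasure μ]
    (hg : Measurable g) : ∀ᵐ x ∂μ, (graphLaw μ g).condKernel x = Measure.dirac (g x) := by
  have h := eq_condKernel_of_measure_eq_compProd (ρ := graphLaw μ g) (Kernel.deterministic g hg)
    (by rw [Measure.fst, map_fst_graphLaw μ hg, Measure.compProd_deterministic, graphLaw])
  rw [Measure.fst, map_fst_graphLaw μ hg] at h
  filter_upwards [h] with x hx
  rw [← hx, Kernel.deterministic_apply]

variable {ι : Type*} [Fintype ι]

lemma pi_graphLaw_apply [IsFiniteMeasure μ] (hg : Measurable g) {A : Set (ι → 𝓧 × β)}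
    (hA : MeasurableSet A) :
    (Measure.pi fun _ : ι ↦ graphLaw μ g) A
      = (Measure.pi fun _ : ι ↦ μ) {xs | (fun i ↦ (xs i, g (xs i))) ∈ A} :=
  ((measurePreserving_pi (fun _ ↦ μ) (fun _ ↦ graphLaw μ g)
    fun _ ↦ ⟨measurable_id'.prodMk hg, rfl⟩).measure_preimage hA.nullMeasurableSet).symm

lemma pi_prod_apply [SigmaFinite μ] (ν : Measure β) [SigmaFinite ν] {A : Set (ι → 𝓧 × β)}
    (hA : MeasurableSet A) :
    (Measure.pi fun _ : ι ↦ μ.prod ν) A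
      = ∫⁻ xs, (Measure.pi fun _ : ι ↦ ν) {w | (fun i ↦ (xs i, w i)) ∈ A}
          ∂(Measure.pi fun _ : ι ↦ μ) := by
  have hmp := (measurePreserving_arrowProdEquivProdArrow 𝓧 β ι (fun _ ↦ μ) (fun _ ↦ ν)).symm
    (MeasurableEquiv.arrowProdEquivProdArrow 𝓧 β ι)
  rw [← hmp.map_eq, Measure.map_apply hmp.measurable hA, Measure.prod_apply (hmp.measurable hA)]
  rfl

end GraphLaw

lemma tv_dirac_uniformOfFintype {α : Type*} [Fintype α] [Nonempty α] [MeasurableSpace α]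
    [MeasurableSingletonClass α] (a : α) :
    (1 / 2) * ∑ y : α, |(Measure.dirac a {y}).toReal
      - ((PMF.uniformOfFintype α).toMeasure {y}).toReal| = 1 - 1 / Fintype.card α := by
  classical
  have hcard : (1 : ℝ) ≤ Fintype.card α := Nat.one_le_cast.2 Fintype.card_pos
  have hterm : ∀ y, |(Measure.dirac a {y}).toReal
      - ((PMF.uniformOfFintype α).toMeasure {y}).toReal|
      = 1 / Fintype.card α + if y = a then 1 - 2 / (Fintype.card α : ℝ) else 0 := by
    intro y
    rw [PMF.toMeasure_uniformOfFintype_singleton,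
      Measure.dirac_apply' _ (measurableSet_singleton y)]
    by_cases hy : y = a
    · subst hy
      simp only [Set.mem_singleton_iff, Set.indicator_of_mem, Pi.one_apply, if_true,
        ENNReal.toReal_one, ENNReal.toReal_inv, ENNReal.toReal_natCast]
      rw [abs_of_nonneg (sub_nonneg.2 (inv_le_one_of_one_le₀ hcard))]
      ring
    · simp [hy]
  rw [Finset.sum_congr rfl fun y _ ↦ hterm y, Finset.sum_add_distrib, Finset.sum_ite_eq']
  simp only [one_div, Finset.sum_const, Finset.card_univ, nsmul_eq_mul, Finset.mem_univ,
    if_true]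
  field_simp
  ring

section Etv

variable {𝓧 : Type*} [MeasurableSpace 𝓧]

noncomputable def etv {K : ℕ} [NeZero K] (ρ : Measure (𝓧 × Fin K)) [IsFiniteMeasure ρ] : ℝ :=
  (1 - 1 / (K : ℝ))⁻¹ * ∫ x, (1 / 2) * ∑ y : Fin K,
    |(ρ.condKernel x {y}).toReal - (ρ.map Prod.snd {y}).toReal| ∂(ρ.map Prod.fst)

lemma etv_graphLaw {K : ℕ} [NeZero K] (hK : 2 ≤ K) (μ : Measure 𝓧) [IsProbabilityMeasure μ]
    {g : 𝓧 → Fin K} (hg : Measurable g)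
    (hunif : μ.map g = (PMF.uniformOfFintype (Fin K)).toMeasure) :
    etv (graphLaw μ g) = 1 := by
  have hK' : (1 : ℝ) - 1 / K ≠ 0 := by
    refine (sub_pos.2 ((div_lt_one (by positivity)).2 ?_)).ne'
    exact_mod_cast hK
  have htv : ∀ᵐ x ∂μ, (1 / 2) * ∑ y : Fin K, |((graphLaw μ g).condKernel x {y}).toReal
      - ((graphLaw μ g).map Prod.snd {y}).toReal| = 1 - 1 / K := by
    filter_upwards [condKernel_graphLaw μ hg] with x hx
    rw [hx, map_snd_graphLaw μ hg, hunif, tv_dirac_uniformOfFintype, Fintype.card_fin]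
  rw [etv, map_fst_graphLaw μ hg, integral_congr_ae htv, integral_const, probReal_univ, one_smul,
    inv_mul_cancel₀ hK']

end Etv

section CellLabel

variable {𝓧 : Type*} {J K : ℕ}

def cellLabel (cell : 𝓧 → Fin J × Fin K) (θ : Fin J → Fin K) (x : 𝓧) : Fin K :=
  (cell x).2 + θ (cell x).1

variable {cell : 𝓧 → Fin J × Fin K}

lemma measure_pi_cellLabel_of_injective [NeZero K] {ι : Type*} [Fintype ι] {xs : ι → 𝓧}
    (hxs : (fun i ↦ (cell (xs i)).1).Injective) (W : Set (ι → Fin K)) :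
    (Measure.pi fun _ : Fin J ↦ (PMF.uniformOfFintype (Fin K)).toMeasure)
        {θ | (fun i ↦ cellLabel cell θ (xs i)) ∈ W}
      = (Measure.pi fun _ : ι ↦ (PMF.uniformOfFintype (Fin K)).toMeasure) W := by
  rw [← map_pi_comp_injective _ hxs (f := fun i k ↦ (cell (xs i)).2 + k) (fun _ ↦ .of_discrete)
    fun i ↦ PMF.map_toMeasure_uniformOfFintype_equiv (Equiv.addLeft _),
    Measure.map_apply .of_discrete .of_discrete]
  rfl

variable [MeasurableSpace 𝓧]

lemma measurable_cellLabel (hcell : Measurable cell) (θ : Fin J → Fin K) :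
    Measurable (cellLabel cell θ) :=
  (Measurable.of_discrete (f := fun p : Fin J × Fin K ↦ p.2 + θ p.1)).comp hcell

variable [NeZero J] [NeZero K] (μ : Measure 𝓧)

lemma map_cellLabel (hcell : Measurable cell)
    (hlaw : μ.map cell = (PMF.uniformOfFintype (Fin J × Fin K)).toMeasure) (θ : Fin J → Fin K) :
    μ.map (cellLabel cell θ) = (PMF.uniformOfFintype (Fin K)).toMeasure := by
  let shear := Equiv.prodShear (Equiv.refl (Fin J)) fun a ↦ Equiv.addRight (θ a)
  rw [show cellLabel cell θ = Prod.snd ∘ shear ∘ cell from rfl,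
    ← Measure.map_map measurable_snd (Measurable.of_discrete.comp hcell),
    ← Measure.map_map .of_discrete hcell, hlaw, PMF.map_toMeasure_uniformOfFintype_equiv,
    ← PMF.toMeasure_uniformOfFintype_prod, Measure.map_snd_prod, measure_univ, one_smul]

lemma map_cell_fst (hcell : Measurable cell)
    (hlaw : μ.map cell = (PMF.uniformOfFintype (Fin J × Fin K)).toMeasure) :
    μ.map (fun x ↦ (cell x).1) = (PMF.uniformOfFintype (Fin J)).toMeasure := by
  rw [show (fun x ↦ (cell x).1) = Prod.fst ∘ cell from rfl,
    ← Measure.map_map measurable_fst hcell, hlaw, ← PMF.toMeasure_uniformOfFintype_prod,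
    Measure.map_fst_prod, measure_univ, one_smul]

variable [IsProbabilityMeasure μ] {ι : Type*} [Fintype ι]

lemma lintegral_measure_pi_cellLabel_le (hcell : Measurable cell)
    (hlaw : μ.map cell = (PMF.uniformOfFintype (Fin J × Fin K)).toMeasure)
    {A : Set (ι → 𝓧 × Fin K)} (hA : MeasurableSet A) :
    ∫⁻ xs, (Measure.pi fun _ : Fin J ↦ (PMF.uniformOfFintype (Fin K)).toMeasure)
        {θ | (fun i ↦ (xs i, cellLabel cell θ (xs i))) ∈ A} ∂(Measure.pi fun _ : ι ↦ μ)
      ≤ (Measure.pi fun _ : ι ↦ μ.prod (PMF.uniformOfFintype (Fin K)).toMeasure) A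
        + Fintype.card ι * Fintype.card ι * (J : ℝ≥0∞)⁻¹ := by
  set Bad := {xs : ι → 𝓧 | ¬ (fun i ↦ (cell (xs i)).1).Injective}
  have hBad : MeasurableSet Bad :=
    (measurable_pi_lambda (fun (xs : ι → 𝓧) i ↦ (cell (xs i)).1) fun i ↦
      measurable_fst.comp (hcell.comp (measurable_pi_apply i)))
      (MeasurableSet.of_discrete (s := {f : ι → Fin J | ¬ f.Injective}))
  calc _ ≤ ∫⁻ xs, (Measure.pi fun _ : ι ↦ (PMF.uniformOfFintype (Fin K)).toMeasure)
          {w | (fun i ↦ (xs i, w i)) ∈ A} + Bad.indicator 1 xs ∂(Measure.pi fun _ : ι ↦ μ) := by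
        refine lintegral_mono fun xs ↦ ?_
        by_cases hxs : xs ∈ Bad
        · rw [indicator_of_mem hxs, Pi.one_apply]
          exact prob_le_one.trans le_add_self
        · rw [indicator_of_notMem hxs, add_zero]
          exact (measure_pi_cellLabel_of_injective (not_not.1 hxs) _).le
    _ = (Measure.pi fun _ : ι ↦ μ.prod (PMF.uniformOfFintype (Fin K)).toMeasure) A
          + (Measure.pi fun _ : ι ↦ μ) Bad := by
        rw [lintegral_add_right _ (measurable_one.indicator hBad), lintegral_indicator_one hBad,
          pi_prod_apply μ _ hA]
    _ ≤ _ := by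
        grw [measure_pi_not_injective_le μ (c := fun x ↦ (cell x).1) (measurable_fst.comp hcell)
          (map_cell_fst μ hcell hlaw), Fintype.card_fin]

theorem le_pi_prod_add_of_forall_le_pi_graphLaw (hcell : Measurable cell)
    (hlaw : μ.map cell = (PMF.uniformOfFintype (Fin J × Fin K)).toMeasure)
    {A : Set (ι → 𝓧 × Fin K)} (hA : MeasurableSet A)
    {a : ℝ≥0∞} (ha : ∀ θ, a ≤ (Measure.pi fun _ : ι ↦ graphLaw μ (cellLabel cell θ)) A) :
    a ≤ (Measure.pi fun _ : ι ↦ μ.prod (PMF.uniformOfFintype (Fin K)).toMeasure) A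
      + Fintype.card ι * Fintype.card ι * (J : ℝ≥0∞)⁻¹ := by
  set Θ := Measure.pi fun _ : Fin J ↦ (PMF.uniformOfFintype (Fin K)).toMeasure
  set μₙ := Measure.pi fun _ : ι ↦ μ
  set S : Set ((Fin J → Fin K) × (ι → 𝓧)) :=
    {p | (fun i ↦ (p.2 i, cellLabel cell p.1 (p.2 i))) ∈ A}
  have hS : MeasurableSet S := by
    refine hA.preimage (measurable_pi_lambda _ fun i ↦ ?_)
    have hxi : Measurable fun p : (Fin J → Fin K) × (ι → 𝓧) ↦ p.2 i :=
      (measurable_pi_apply i).comp measurable_snd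
    exact hxi.prodMk ((Measurable.of_discrete (f := fun q : (Fin J → Fin K) × (Fin J × Fin K) ↦
      q.2.2 + q.1 q.2.1)).comp (measurable_fst.prodMk (hcell.comp hxi)))
  calc a = ∫⁻ _, a ∂Θ := by rw [lintegral_const, measure_univ, mul_one]
    _ ≤ ∫⁻ θ, μₙ (Prod.mk θ ⁻¹' S) ∂Θ :=
        lintegral_mono fun θ ↦
          (ha θ).trans_eq (pi_graphLaw_apply μ (measurable_cellLabel hcell θ) hA)
    _ = ∫⁻ xs, Θ ((fun θ ↦ (θ, xs)) ⁻¹' S) ∂μₙ := by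
        rw [← Measure.prod_apply hS, Measure.prod_apply_symm hS]
    _ ≤ _ := lintegral_measure_pi_cellLabel_le μ hcell hlaw hA

end CellLabel

end ProbabilityTheory

theorem stmt12_general (LX : Measure ℝ) [IsProbabilityMeasure LX] (hLX : ∀ x : ℝ, LX {x} = 0)
    (K : ℕ) [NeZero K] (hK : 2 ≤ K) (n : ℕ)
    (α : ℝ)
    (C : (Fin n → ℝ × Fin K) → ℝ) (hC : Measurable C)
    (hvalid : ∀ (ρ : Measure (ℝ × Fin K)) [IsProbabilityMeasure ρ],
      ρ.map Prod.fst = LX →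
      ρ.map Prod.snd = (PMF.uniformOfFintype (Fin K)).toMeasure →
      ENNReal.ofReal (1 - α) ≤
        (Measure.pi fun _ : Fin n => ρ)
          {d | (1 - 1/(K:ℝ))⁻¹ * ∫ x, (1/2) * ∑ y : Fin K,
              |(ρ.condKernel x {y}).toReal - (ρ.map Prod.snd {y}).toReal|
            ∂(ρ.map Prod.fst) ≤ C d}) :
    ENNReal.ofReal (1 - α) ≤
      (Measure.pi fun _ : Fin n => LX.prod (PMF.uniformOfFintype (Fin K)).toMeasure)
        {d | 1 ≤ C d} := by
  have : NullSingletonClass LX := ⟨hLX⟩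
  have hA : MeasurableSet {d | (1 : ℝ) ≤ C d} := measurableSet_le measurable_const hC
  have hbound : ∀ J : ℕ, ENNReal.ofReal (1 - α) ≤
      (Measure.pi fun _ : Fin n => LX.prod (PMF.uniformOfFintype (Fin K)).toMeasure)
        {d | 1 ≤ C d} + n * n * ((J + 1 : ℕ) : ℝ≥0∞)⁻¹ := by
    intro J
    obtain ⟨cell, hcell, hlaw⟩ :=
      exists_measurable_map_eq_uniformOfFintype LX (Fin (J + 1) × Fin K)
    simpa using le_pi_prod_add_of_forall_le_pi_graphLaw LX hcell hlaw hA fun θ ↦ by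
      have hg := measurable_cellLabel hcell θ
      have := isProbabilityMeasure_graphLaw LX hg
      have hunif := map_cellLabel LX hcell hlaw θ
      have h : ENNReal.ofReal (1 - α) ≤ (Measure.pi fun _ ↦ graphLaw LX (cellLabel cell θ))
          {d | etv (graphLaw LX (cellLabel cell θ)) ≤ C d} :=
        hvalid _ (map_fst_graphLaw LX hg) (by rw [map_snd_graphLaw LX hg, hunif])
      rwa [etv_graphLaw hK LX hg hunif] at h
  have hlim : Tendsto (fun J : ℕ ↦ n * n * ((J + 1 : ℕ) : ℝ≥0∞)⁻¹) atTop (𝓝 0) := by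
    simpa using ENNReal.Tendsto.const_mul
      (ENNReal.tendsto_inv_nat_nhds_zero.comp (tendsto_add_atTop_nat 1)) (.inr (by finiteness))
  simpa using ge_of_tendsto' (tendsto_const_nhds.add hlim) hbound

/-- Impossibility of a nontrivial ETV upper confidence bound: if C is a
(1-α)-valid upper confidence bound for ETV(X,Y) over all joint laws ρ of (X,Y)
with continuous X-marginal L_X and uniform Y-marginal on {1,…,K}, then under
independence (ρ = L_X × Unif) C must be ≥ 1 (the maximal ETV value) with
probability at least 1-α. -/
theorem stmt12 (LX : Measure ℝ) [IsProbabilityMeasure LX] (hLX : ∀ x : ℝ, LX {x} = 0)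
    (K : ℕ) [NeZero K] (hK : 2 ≤ K) (n : ℕ) (hn : 0 < n)
    (α : ℝ) (hα : α ∈ Set.Ioo (0:ℝ) 1)
    (C : (Fin n → ℝ × Fin K) → ℝ) (hC : Measurable C)
    (hvalid : ∀ (ρ : Measure (ℝ × Fin K)) [IsProbabilityMeasure ρ],
      ρ.map Prod.fst = LX →
      ρ.map Prod.snd = (PMF.uniformOfFintype (Fin K)).toMeasure →
      ENNReal.ofReal (1 - α) ≤
        (Measure.pi fun _ : Fin n => ρ)
          {d | (1 - 1/(K:ℝ))⁻¹ * ∫ x, (1/2) * ∑ y : Fin K,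
              |(ρ.condKernel x {y}).toReal - (ρ.map Prod.snd {y}).toReal|
            ∂(ρ.map Prod.fst) ≤ C d}) :
    ENNReal.ofReal (1 - α) ≤
      (Measure.pi fun _ : Fin n => LX.prod (PMF.uniformOfFintype (Fin K)).toMeasure)
        {d | 1 ≤ C d} :=
  stmt12_general LX hLX K hK n α C hC hvalid
end

section
/- In the conjoint model where with probability q the respondent is independent (so Y | X,Z ~ Bernoulli(0.5) regardless of X), and otherwise P(Y=0 | X=(x₀,x₁), Z) equals 0.5 if x₀=x₁, equals p if x₀ matches the respondent's party and x₁ does not, and equals 1-p otherwise, with X=(X⁰,X¹) uniform on the four party pairs {D,R}² independent of Z, the expected total variation E[TV(L(Y|X,Z), L(Y|Z))] equals (1-q)|p - 0.5|. -/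
/-! Independent respondents (the event `ind`, of probability `q`) answer as a fair coin, so they
contribute nothing. For a partisan respondent the two profiles with `x₀ = x₁` contribute nothing
either, while each of the two mixed profiles is at distance `|p - 1/2|` from `1/2`, whichever
party the respondent belongs to. The integrand is therefore the constant `|p - 1/2| / 2` on
`indᶜ`, an event of probability `1 - q`. -/

open MeasureTheory

lemma sum_abs_partisan_sub_half (b : Bool) (p : ℝ) :
    ∑ x : Bool × Bool,
      |(if x.1 = x.2 then 1/2 else if x.1 = b then p else 1 - p) - 1/2| = 2 * |p - 1/2| := by
  have h : |1 - p - 1/2| = |p - 1/2| := by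
    rw [← abs_neg]; ring_nf
  cases b <;> simp only [Fintype.sum_prod_type, Fintype.sum_bool] <;> norm_num [h] <;> ring

lemma measureReal_compl_of_eq_ofReal {Ω : Type*} [MeasurableSpace Ω] {P : Measure Ω}
    [IsProbabilityMeasure P] {s : Set Ω} (hs : MeasurableSet s) {q : ℝ} (hq0 : 0 ≤ q)
    (hq : P s = ENNReal.ofReal q) : P.real sᶜ = 1 - q := by
  rw [probReal_compl_eq_one_sub hs, measureReal_def, hq, ENNReal.toReal_ofReal hq0]

open Classical in
theorem stmt14_general {𝒵 : Type*} [MeasurableSpace 𝒵] (P : Measure 𝒵) [IsProbabilityMeasure P]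
    (ind : Set 𝒵) (hind : MeasurableSet ind)
    (party : 𝒵 → Bool)
    (q p : ℝ) (hq01 : q ∈ Set.Icc (0:ℝ) 1)
    (hq : P ind = ENNReal.ofReal q)
    (g : 𝒵 → Bool × Bool → ℝ)
    (hg : ∀ z x, g z x = if z ∈ ind then 1/2 else if x.1 = x.2 then 1/2
        else if x.1 = party z then p else 1 - p) :
    2 * ∫ z, (1/4) * ∑ x : Bool × Bool, |g z x - 1/2| ∂P = (1 - q) * |p - 1/2| := by
  have integrand_eq : (fun z => (1/4 : ℝ) * ∑ x : Bool × Bool, |g z x - 1/2|) =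
      indᶜ.indicator (fun _ => |p - 1/2| / 2) := by
    funext z
    by_cases hz : z ∈ ind
    · simp [hz, hg]
    · simp only [hg, hz, if_false, sum_abs_partisan_sub_half, Set.indicator_of_mem (Set.mem_compl hz)]
      ring
  rw [integrand_eq, integral_indicator_const _ hind.compl,
    measureReal_compl_of_eq_ofReal hind hq01.1 hq, smul_eq_mul]
  ring

open Classical in
theorem stmt14 {𝒵 : Type*} [MeasurableSpace 𝒵] (P : Measure 𝒵) [IsProbabilityMeasure P]
    (ind : Set 𝒵) (hind : MeasurableSet ind)
    (party : 𝒵 → Bool) (hparty : Measurable party)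
    (q p : ℝ) (hq01 : q ∈ Set.Icc (0:ℝ) 1) (hp01 : p ∈ Set.Icc (0:ℝ) 1)
    (hq : P ind = ENNReal.ofReal q)
    (g : 𝒵 → Bool × Bool → ℝ)
    (hg : ∀ z x, g z x = if z ∈ ind then 1/2 else if x.1 = x.2 then 1/2
        else if x.1 = party z then p else 1 - p) :
    2 * ∫ z, (1/4) * ∑ x : Bool × Bool, |g z x - 1/2| ∂P = (1 - q) * |p - 1/2| :=
  stmt14_general P ind hind party q p hq01 hq g hg
end

section
/- If Y has finite support and L(Y_k | X, Y_{1:(k-1)}, Z) = L(Y_k | Y_{1:(k-1)}, Z) almost surely, then HETV_k(X,Y,Z) = E[TV(L(Y_{1:k}|X,Z), L(Y_{1:k}|Z))] - E[TV(L(Y_{1:(k-1)}|X,Z), L(Y_{1:(k-1)}|Z))] = 0. -/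
open MeasureTheory

/-- If L(Y_k | X, Y_{1:(k-1)}, Z) = L(Y_k | Y_{1:(k-1)}, Z) (encoded by the
factorizations r(y|x,z) = r_c(π y|x,z)·t(y|π y,z) and s(y|z) = s_c(π y|z)·t(y|π y,z)
with a common within-group conditional t not depending on x), then HETV_k = 0:
E[TV(L(Y_{1:k}|X,Z), L(Y_{1:k}|Z))] - E[TV(L(Y_{1:(k-1)}|X,Z), L(Y_{1:(k-1)}|Z))] = 0. -/
theorem stmt18 {𝒳 𝒵 𝒴 𝒴c : Type*} [MeasurableSpace 𝒳] [MeasurableSpace 𝒵]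
    [Fintype 𝒴] [Fintype 𝒴c] [DecidableEq 𝒴c]
    (P : Measure (𝒳 × 𝒵)) [IsProbabilityMeasure P]
    (π : 𝒴 → 𝒴c) (r : 𝒳 × 𝒵 → 𝒴 → ℝ) (s : 𝒵 → 𝒴 → ℝ) (t : 𝒴c → 𝒵 → 𝒴 → ℝ)
    (hrm : ∀ y, Measurable fun q => r q y) (hsm : ∀ y, Measurable fun z => s z y)
    (hr0 : ∀ q y, 0 ≤ r q y) (hs0 : ∀ z y, 0 ≤ s z y)
    (hr1 : ∀ q, ∑ y, r q y = 1) (hs1 : ∀ z, ∑ y, s z y = 1)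
    (ht0 : ∀ c z y, 0 ≤ t c z y)
    (ht1 : ∀ c z, ∑ y ∈ Finset.univ.filter fun y => π y = c, t c z y = 1)
    (hrfac : ∀ q y, r q y = (∑ y' ∈ Finset.univ.filter fun y' => π y' = π y, r q y')
        * t (π y) q.2 y)
    (hsfac : ∀ z y, s z y = (∑ y' ∈ Finset.univ.filter fun y' => π y' = π y, s z y')
        * t (π y) z y) :
    (∫ q, (1/2) * ∑ y, |r q y - s q.2 y| ∂P)
        - (∫ q, (1/2) * ∑ c : 𝒴c,
            |(∑ y ∈ Finset.univ.filter fun y => π y = c, r q y)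
              - ∑ y ∈ Finset.univ.filter fun y => π y = c, s q.2 y| ∂P) = 0 := by
  have key : ∀ q : 𝒳 × 𝒵, (∑ y, |r q y - s q.2 y|)
      = ∑ c : 𝒴c, |(∑ y ∈ Finset.univ.filter fun y => π y = c, r q y)
              - ∑ y ∈ Finset.univ.filter fun y => π y = c, s q.2 y| := by
    intro q
    rw [← Finset.sum_fiberwise Finset.univ π (fun y => |r q y - s q.2 y|)]
    refine Finset.sum_congr rfl fun c _ => ?_
    have : ∀ y ∈ Finset.univ.filter fun y => π y = c,
        |r q y - s q.2 y|
        = |(∑ y ∈ Finset.univ.filter fun y => π y = c, r q y)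
              - ∑ y ∈ Finset.univ.filter fun y => π y = c, s q.2 y| * t c q.2 y := by
      intro y hy
      simp only [Finset.mem_filter] at hy
      rw [hrfac q y, hsfac q.2 y, hy.2, ← sub_mul, abs_mul, abs_of_nonneg (ht0 c q.2 y)]
    rw [Finset.sum_congr rfl this, ← Finset.mul_sum, ht1 c q.2, mul_one]
  have heq : (fun q : 𝒳 × 𝒵 => (1/2 : ℝ) * ∑ y, |r q y - s q.2 y|)
      = fun q => (1/2 : ℝ) * ∑ c : 𝒴c,
            |(∑ y ∈ Finset.univ.filter fun y => π y = c, r q y)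
              - ∑ y ∈ Finset.univ.filter fun y => π y = c, s q.2 y| := by
    funext q; rw [key q]
  rw [heq, sub_self]
end
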